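/- arXiv:2007.08119 — 5 statements merged into one kernel-verified Lean document; each statement's English description precedes it below -/
import Mathlib

section
/- Let ρ : ℝ → ℝ be continuous on [0,∞), with ρ(x) = 1 for 0 ≤ x ≤ 1, differentiable on (1,∞), and satisfying the delay differential equation x·ρ'(x) + ρ(x−1) = 0 for all x > 1 (so ρ is the Dickman function). Then for all x ≥ 1, ρ(x) ≥ x^{−1.42·x}. -/
open Real Set MeasureTheory intervalIntegral

/-!
Write `g x = x ^ (-(1.42 x))`. On `[1, 2]` the delay equation forces `ρ x = 1 - log x`,
which dominates `exp (-1.42 (x - 1)) ≥ g x`. Integrating the equation gives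
`x ρ x = ∫_{x-1}^x ρ` for `x ≥ 1`, while `g` satisfies the strict inequality
`x g x < ∫_{x-1}^x g` for `x ≥ 2`: convexity of `t log t` gives `g t ≥ g x · exp (m (x - t))`
on `[x - 1, x]` with `m = 1.42 (log (x - 1) + 1)`, and `(exp m - 1) / m > x`.
Hence at the first point `c` where `ρ` could drop below `g`,
`c ρ c = ∫ ρ ≥ ∫ g > c g c = c ρ c`.
-/

theorem eq_of_hasDerivAt_eq_zero {f : ℝ → ℝ} {a b : ℝ} (hab : a ≤ b)
    (hf : ContinuousOn f (Icc a b)) (hf' : ∀ t ∈ Ioo a b, HasDerivAt f 0 t) : f b = f a := by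
  have h := integral_eq_sub_of_hasDeriv_right_of_le hab hf
    (fun t ht ↦ (hf' t ht).hasDerivWithinAt) (intervalIntegrable_const (c := (0 : ℝ)))
  rw [intervalIntegral.integral_zero] at h
  linarith

theorem min_le_of_hasDerivAt_eq_mul_antitone {h w φ : ℝ → ℝ} {a b u : ℝ}
    (hh : ContinuousOn h (Icc a b)) (hderiv : ∀ t ∈ Ioo a b, HasDerivAt h (w t * φ t) t)
    (hw : ∀ t ∈ Ioo a b, 0 < w t) (hφ : AntitoneOn φ (Icc a b)) (hu : u ∈ Icc a b) :
    min (h a) (h b) ≤ h u := by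
  rcases le_or_gt 0 (φ u) with hφu | hφu
  · have hmono : MonotoneOn h (Icc a u) := by
      refine monotoneOn_of_hasDerivWithinAt_nonneg (f' := fun t ↦ w t * φ t) (convex_Icc a u)
        (hh.mono (Icc_subset_Icc_right hu.2)) (fun t ht ↦ ?_) (fun t ht ↦ ?_) <;>
        rw [interior_Icc] at ht <;> have ht' : t ∈ Ioo a b := ⟨ht.1, ht.2.trans_le hu.2⟩
      · exact (hderiv t ht').hasDerivWithinAt
      · exact mul_nonneg (hw t ht').le
          (hφu.trans (hφ (Ioo_subset_Icc_self ht') hu ht.2.le))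
    exact (min_le_left _ _).trans (hmono (left_mem_Icc.2 hu.1) (right_mem_Icc.2 hu.1) hu.1)
  · have hanti : AntitoneOn h (Icc u b) := by
      refine antitoneOn_of_hasDerivWithinAt_nonpos (f' := fun t ↦ w t * φ t) (convex_Icc u b)
        (hh.mono (Icc_subset_Icc_left hu.1)) (fun t ht ↦ ?_) (fun t ht ↦ ?_) <;>
        rw [interior_Icc] at ht <;> have ht' : t ∈ Ioo a b := ⟨hu.1.trans_lt ht.1, ht.2⟩
      · exact (hderiv t ht').hasDerivWithinAt
      · exact mul_nonpos_of_nonneg_of_nonpos (hw t ht').le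
          ((hφ hu (Ioo_subset_Icc_self ht') ht.1.le).trans hφu.le)
    exact (min_le_right _ _).trans (hanti (left_mem_Icc.2 hu.2) (right_mem_Icc.2 hu.2) hu.2)

theorem rpow_neg_mul_self {x : ℝ} (hx : 0 < x) (c : ℝ) :
    x ^ (-(c * x)) = exp (-(c * (x * log x))) := by
  rw [rpow_def_of_pos hx]
  ring_nf

theorem continuousOn_rpow_neg_mul_self (c : ℝ) :
    ContinuousOn (fun t : ℝ ↦ t ^ (-(c * t))) (Ioi 0) :=
  continuousOn_id.rpow (continuousOn_const.mul continuousOn_id).neg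
    fun _ ht ↦ Or.inl (ne_of_gt ht)

theorem intervalIntegrable_rpow_neg_mul_self {a b : ℝ} (ha : 0 < a) (hab : a ≤ b) (c : ℝ) :
    IntervalIntegrable (fun t : ℝ ↦ t ^ (-(c * t))) volume a b := by
  refine ((continuousOn_rpow_neg_mul_self c).mono fun t ht ↦ ?_).intervalIntegrable
  rw [uIcc_of_le hab] at ht
  exact ha.trans_le ht.1

theorem sub_mul_log_add_one_le {s t x : ℝ} (hs : 0 < s) (hst : s ≤ t) (htx : t ≤ x) :
    (x - t) * (log s + 1) ≤ x * log x - t * log t := by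
  have ht : 0 < t := hs.trans_le hst
  have hx : 0 < x := ht.trans_le htx
  have hlog_div : 1 - t / x ≤ log x - log t := by
    simpa only [inv_div, log_div hx.ne' ht.ne'] using one_sub_inv_le_log_of_pos (div_pos hx ht)
  have hlog_mono : log s ≤ log t := log_le_log hs hst
  have hx_mul : x * (1 - t / x) = x - t := by field_simp
  nlinarith [mul_le_mul_of_nonneg_left hlog_div hx.le,
    mul_le_mul_of_nonneg_left hlog_mono (sub_nonneg.2 htx)]

theorem exp_one_point_four_two_gt : (3.84 : ℝ) < exp 1.42 := by
  have he : exp 1.42 = exp 1 * exp 0.42 := by rw [← exp_add]; norm_num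
  have h1 : (1.42 : ℝ) ≤ exp 0.42 := by linarith [add_one_le_exp (0.42 : ℝ)]
  rw [he]
  nlinarith [exp_one_gt_d9]

theorem one_add_mul_lt_exp_of_one_le {u : ℝ} (hu : 1 ≤ u) :
    1 + (u + 1) * (1.42 * (log u + 1)) < exp (1.42 * (log u + 1)) := by
  set L := log u
  have hL : 0 ≤ L := log_nonneg hu
  have hLu : L ≤ u - 1 := log_le_sub_one_of_pos (by linarith)
  have hsplit : exp (1.42 * (L + 1)) = u * exp (0.42 * L) * exp 1.42 := by
    rw [show 1.42 * (L + 1) = L + 0.42 * L + 1.42 by ring, exp_add, exp_add,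
      exp_log (by linarith)]
  have hL' : 1 + 0.42 * L ≤ exp (0.42 * L) := by linarith [add_one_le_exp (0.42 * L)]
  have hprod : u * (1 + 0.42 * L) * 3.84 < u * exp (0.42 * L) * exp 1.42 :=
    mul_lt_mul' (by gcongr) exp_one_point_four_two_gt (by norm_num) (by positivity)
  nlinarith [mul_nonneg (by linarith : (0:ℝ) ≤ u) hL]

theorem exp_neg_le_one_sub_log {x : ℝ} (hx : x ∈ Icc (1 : ℝ) 2) :
    exp (-(1.42 * (x - 1))) ≤ 1 - log x := by
  set h : ℝ → ℝ := fun t ↦ 1 - log t - exp (-(1.42 * (t - 1)))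
  -- `h' = w φ` with `w > 0` and `φ` decreasing: `h` rises, then falls, so `min (h 1) (h 2) ≤ h`
  have hderiv : ∀ t, 0 < t → HasDerivAt h
      (exp (-(1.42 * (t - 1))) / t * (1.42 * t - exp (1.42 * (t - 1)))) t := by
    intro t ht
    have hlin : HasDerivAt (fun t ↦ 1.42 * (t - 1)) 1.42 t := by
      simpa using ((hasDerivAt_id t).sub_const 1).const_mul (1.42 : ℝ)
    refine (((hasDerivAt_log ht.ne').const_sub 1).sub hlin.neg.exp).congr_deriv ?_
    have hE : exp (-(1.42 * (t - 1))) * exp (1.42 * (t - 1)) = 1 := by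
      rw [← exp_add]; simp
    field_simp
    linear_combination hE
  have hφ : AntitoneOn (fun t ↦ 1.42 * t - exp (1.42 * (t - 1))) (Icc 1 2) := by
    intro s hs t ht hst
    have hexp_ge : 1.42 * (t - s) + 1 ≤ exp (1.42 * (t - s)) := add_one_le_exp _
    have hsplit : exp (1.42 * (t - 1)) = exp (1.42 * (s - 1)) * exp (1.42 * (t - s)) := by
      rw [← exp_add]; ring_nf
    have hs_ge : 1 ≤ exp (1.42 * (s - 1)) := one_le_exp (by linarith [hs.1])
    simp only
    nlinarith [exp_pos (1.42 * (t - s))]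
  have hmin := min_le_of_hasDerivAt_eq_mul_antitone (h := h)
    (fun t ht ↦ (hderiv t (by linarith [ht.1])).continuousAt.continuousWithinAt)
    (fun t ht ↦ hderiv t (by linarith [ht.1]))
    (fun t ht ↦ div_pos (exp_pos _) (by linarith [ht.1])) hφ hx
  have h1 : h 1 = 0 := by simp [h]
  have h2 : 0 < h 2 := by
    have hexp : exp (-(1.42 * (2 - 1))) < 0.2605 := by
      rw [show -(1.42 * ((2:ℝ) - 1)) = -1.42 by norm_num, exp_neg]
      calc (exp 1.42)⁻¹
        _ < (3.84 : ℝ)⁻¹ := inv_strictAnti₀ (by norm_num) exp_one_point_four_two_gt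
        _ < 0.2605 := by norm_num
    simp only [h]
    linarith [log_two_lt_d9]
  rw [h1, min_eq_left h2.le] at hmin
  simp only [h] at hmin
  linarith

theorem rpow_neg_le_one_sub_log {x : ℝ} (hx : x ∈ Icc (1 : ℝ) 2) :
    x ^ (-(1.42 * x)) ≤ 1 - log x := by
  have hxlog : x - 1 ≤ x * log x := by
    simpa only [log_one, zero_add, mul_one, mul_zero, sub_zero] using
      sub_mul_log_add_one_le one_pos le_rfl hx.1
  calc x ^ (-(1.42 * x))
    _ = exp (-(1.42 * (x * log x))) := rpow_neg_mul_self (by linarith [hx.1]) _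
    _ ≤ exp (-(1.42 * (x - 1))) := exp_le_exp.2 (by linarith)
    _ ≤ 1 - log x := exp_neg_le_one_sub_log hx

theorem mul_rpow_lt_integral {x : ℝ} (hx : 2 ≤ x) :
    x * x ^ (-(1.42 * x)) < ∫ t in (x - 1)..x, t ^ (-(1.42 * t)) := by
  set m := 1.42 * (log (x - 1) + 1)
  have hm : 0 < m := by have := log_nonneg (by linarith : (1:ℝ) ≤ x - 1); positivity
  have hgx : 0 < x ^ (-(1.42 * x)) := rpow_pos_of_pos (by linarith) _
  -- `m / 1.42` is a lower bound for the slope of `t ↦ t log t` on `[x - 1, x]`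
  have hpt : ∀ t ∈ Icc (x - 1) x,
      x ^ (-(1.42 * x)) * exp (m * (x - t)) ≤ t ^ (-(1.42 * t)) := by
    intro t ht
    have hslope := sub_mul_log_add_one_le (by linarith) ht.1 ht.2
    rw [rpow_neg_mul_self (by linarith), rpow_neg_mul_self (by linarith [ht.1]), ← exp_add,
      exp_le_exp]
    linear_combination 1.42 * hslope
  have hexp_int : ∫ t in (x - 1)..x, exp (m * (x - t)) = (exp m - 1) / m := by
    rw [integral_comp_sub_left (fun s ↦ exp (m * s)), integral_comp_mul_left _ hm.ne',
      integral_exp]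
    simp only [sub_self, mul_zero, exp_zero, sub_sub_cancel, mul_one, smul_eq_mul]
    field_simp
  have hgrowth : x < (exp m - 1) / m := by
    have hQ : 1 + x * m < exp m := by
      have := one_add_mul_lt_exp_of_one_le (u := x - 1) (by linarith)
      rwa [sub_add_cancel] at this
    rw [lt_div_iff₀ hm]
    linarith
  calc x * x ^ (-(1.42 * x)) < x ^ (-(1.42 * x)) * ((exp m - 1) / m) := by
        rw [mul_comm]; exact mul_lt_mul_of_pos_left hgrowth hgx
    _ = ∫ t in (x - 1)..x, x ^ (-(1.42 * x)) * exp (m * (x - t)) := by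
        rw [intervalIntegral.integral_const_mul, hexp_int]
    _ ≤ ∫ t in (x - 1)..x, t ^ (-(1.42 * t)) :=
        integral_mono_on (by linarith) (Continuous.intervalIntegrable (by fun_prop) _ _)
          (intervalIntegrable_rpow_neg_mul_self (by linarith) (by linarith) _) hpt

theorem le_on_Ici_of_le_on_Icc_of_lt {f g : ℝ → ℝ} {a b : ℝ} (hab : a ≤ b)
    (hf : ContinuousOn f (Ici a)) (hg : ContinuousOn g (Ici a))
    (hinit : ∀ y ∈ Icc a b, g y ≤ f y)
    (hstep : ∀ c, b ≤ c → (∀ y ∈ Icc a c, g y ≤ f y) → g c < f c) :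
    ∀ x, a ≤ x → g x ≤ f x := by
  by_contra! hbad
  set T := {y | a ≤ y ∧ f y < g y}
  have hT : T.Nonempty := hbad
  have hTa : BddBelow T := ⟨a, fun y hy ↦ hy.1⟩
  set c := sInf T
  have hbc : b ≤ c := le_csInf hT fun y hy ↦ le_of_not_gt fun hyb ↦
    (hinit y ⟨hy.1, hyb.le⟩).not_gt hy.2
  have hfc : f c ≤ g c := by
    have hTcl : closure T ⊆ Ici a := closure_minimal (fun y hy ↦ hy.1) isClosed_Ici
    exact le_on_closure (fun y hy ↦ hy.2.le) (hf.mono hTcl) (hg.mono hTcl)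
      (csInf_mem_closure hT hTa)
  have hbelow : ∀ y ∈ Ico a c, g y ≤ f y := fun y hy ↦ le_of_not_gt fun hlt ↦
    hy.2.not_ge (csInf_le hTa ⟨hy.1, hlt⟩)
  have hupto : ∀ y ∈ Icc a c, g y ≤ f y := by
    rcases le_or_gt c b with hcb | hbc'
    · exact fun y hy ↦ hinit y ⟨hy.1, hy.2.trans hcb⟩
    · have hcl : closure (Ico a c) = Icc a c := closure_Ico (hab.trans_lt hbc').ne
      have hsub : closure (Ico a c) ⊆ Ici a := hcl ▸ Icc_subset_Ici_self
      exact fun y hy ↦ le_on_closure hbelow (hg.mono hsub) (hf.mono hsub) (hcl ▸ hy)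
  exact (hstep c hbc hupto).not_ge hfc

theorem dickman_eq_one_sub_log {ρ : ℝ → ℝ} (hcont : ContinuousOn ρ (Ici 0))
    (hinit : ∀ x : ℝ, 0 ≤ x → x ≤ 1 → ρ x = 1)
    (hdiff : ∀ x : ℝ, 1 < x → DifferentiableAt ℝ ρ x)
    (hdde : ∀ x : ℝ, 1 < x → x * deriv ρ x + ρ (x - 1) = 0) {x : ℝ}
    (hx : x ∈ Icc (1 : ℝ) 2) :
    ρ x = 1 - log x := by
  have hconst : ρ x + log x = ρ 1 + log 1 := by
    refine eq_of_hasDerivAt_eq_zero (f := fun t ↦ ρ t + log t) hx.1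
      ((hcont.mono fun t ht ↦ zero_le_one.trans ht.1).add
        (continuousOn_log.mono fun t ht ↦ ne_of_gt (zero_lt_one.trans_le ht.1)))
      fun t ht ↦ ?_
    have ht1 : 1 < t := ht.1
    have hρ' : t * deriv ρ t + 1 = 0 := by
      simpa only [hinit (t - 1) (by linarith) (by linarith [ht.2, hx.2])] using hdde t ht1
    refine ((hdiff t ht1).hasDerivAt.add (hasDerivAt_log (by linarith))).congr_deriv ?_
    field_simp
    linarith
  rw [log_one, hinit 1 zero_le_one le_rfl] at hconst
  linarith

theorem dickman_mul_eq_integral {ρ : ℝ → ℝ} (hcont : ContinuousOn ρ (Ici 0))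
    (hinit : ∀ x : ℝ, 0 ≤ x → x ≤ 1 → ρ x = 1)
    (hdiff : ∀ x : ℝ, 1 < x → DifferentiableAt ℝ ρ x)
    (hdde : ∀ x : ℝ, 1 < x → x * deriv ρ x + ρ (x - 1) = 0) {x : ℝ} (hx : 1 ≤ x) :
    x * ρ x = ∫ t in (x - 1)..x, ρ t := by
  have hint : ∀ y, 0 ≤ y → IntervalIntegrable ρ volume 0 y := fun y hy ↦
    (hcont.mono fun t ht ↦ by rw [uIcc_of_le hy] at ht; exact ht.1).intervalIntegrable
  set G : ℝ → ℝ := fun y ↦ ∫ t in (0 : ℝ)..y, ρ t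
  have hG : ∀ y, 0 < y → HasDerivAt G (ρ y) y := fun y hy ↦
    integral_hasDerivAt_right (hint y hy.le)
      ((hcont.mono Ioi_subset_Ici_self).stronglyMeasurableAtFilter isOpen_Ioi y hy)
      (hcont.continuousAt (Ici_mem_nhds hy))
  have hGcont : ContinuousOn G (Icc 0 x) := by
    simpa only [uIcc_of_le (by linarith : (0 : ℝ) ≤ x)] using
      continuousOn_primitive_interval' (hint x (by linarith)) left_mem_uIcc
  have hconst : x * ρ x - (G x - G (x - 1)) = 1 * ρ 1 - (G 1 - G (1 - 1)) := by
    refine eq_of_hasDerivAt_eq_zero (f := fun y ↦ y * ρ y - (G y - G (y - 1))) hx ?_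
      fun t ht ↦ ?_
    · refine (continuousOn_id.mul (hcont.mono fun t ht ↦ zero_le_one.trans ht.1)).sub
        ((hGcont.mono (Icc_subset_Icc_left zero_le_one)).sub
          (hGcont.comp (continuousOn_id.sub continuousOn_const) fun t ht ↦ ?_))
      exact ⟨by linarith [ht.1], by linarith [ht.2]⟩
    · have ht1 : 1 < t := ht.1
      refine (((hasDerivAt_id' t).mul (hdiff t ht1).hasDerivAt).sub ((hG t (by linarith)).sub
        ((hG (t - 1) (by linarith)).comp_sub_const t 1))).congr_deriv ?_
      linarith [hdde t ht1]
  have hG1 : G 1 - G 0 = 1 := by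
    simp only [G, intervalIntegral.integral_same, sub_zero]
    rw [integral_congr (g := fun _ ↦ (1 : ℝ)) fun t ht ↦ ?_]
    · simp
    · rw [uIcc_of_le zero_le_one] at ht
      exact hinit t ht.1 ht.2
  rw [sub_self, hG1, one_mul, hinit 1 zero_le_one le_rfl, sub_self,
    integral_interval_sub_left (hint x (by linarith)) (hint (x - 1) (by linarith))] at hconst
  linarith

/-- Explicit lower bound for the Dickman function: `ρ(x) ≥ x^{−1.42 x}` for `x ≥ 1`. -/
theorem dickman_lower_bound (ρ : ℝ → ℝ)
    (hcont : ContinuousOn ρ (Set.Ici 0))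
    (hinit : ∀ x : ℝ, 0 ≤ x → x ≤ 1 → ρ x = 1)
    (hdiff : ∀ x : ℝ, 1 < x → DifferentiableAt ℝ ρ x)
    (hdde : ∀ x : ℝ, 1 < x → x * deriv ρ x + ρ (x - 1) = 0) :
    ∀ x : ℝ, 1 ≤ x → ρ x ≥ x ^ (-(1.42 * x)) := by
  refine le_on_Ici_of_le_on_Icc_of_lt one_le_two (hcont.mono (Ici_subset_Ici.2 zero_le_one))
    ((continuousOn_rpow_neg_mul_self _).mono fun t ht ↦ mem_Ioi.2 (one_pos.trans_le ht)) ?_ ?_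
  · intro y hy
    rw [dickman_eq_one_sub_log hcont hinit hdiff hdde hy]
    exact rpow_neg_le_one_sub_log hy
  · intro c hc hle
    have hρ : ∀ t ∈ uIcc (c - 1) c, 0 ≤ t := fun t ht ↦ by
      rw [uIcc_of_le (by linarith)] at ht; linarith [ht.1]
    have hmul : c * c ^ (-(1.42 * c)) < c * ρ c := calc
      c * c ^ (-(1.42 * c)) < ∫ t in (c - 1)..c, t ^ (-(1.42 * t)) := mul_rpow_lt_integral hc
      _ ≤ ∫ t in (c - 1)..c, ρ t :=
        integral_mono_on (by linarith)
          (intervalIntegrable_rpow_neg_mul_self (by linarith) (by linarith) _)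
          (hcont.mono hρ).intervalIntegrable fun t ht ↦ hle t ⟨by linarith [ht.1], ht.2⟩
      _ = c * ρ c := (dickman_mul_eq_integral hcont hinit hdiff hdde (by linarith)).symm
    exact lt_of_mul_lt_mul_left hmul (by linarith)
end

section
/- For every complex number s with Re(s) > 1, |ζ'(s) + 1/(s−1)²| ≤ (1 + |s|)/2, where ζ' is the derivative of the Riemann zeta function. -/
/-!
For `Re s > 1` we have `-ζ'(s) = ∑ n⁻ˢ log n`, while `∫₁^∞ t⁻ˢ log t dt = 1 / (s - 1)²`.
Summing the trapezoid rule over the intervals `[n, n + 1]`, the sum and the integral differ by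
at most half of `∫₁^∞ |d/dt (t⁻ˢ log t)| dt`. Since `Re s ≥ 1`, that derivative is bounded by
`(1 + |s| log t) / t²`, whose integral over `[1, ∞)` is exactly `1 + |s|`.
-/

open MeasureTheory Set Filter Topology

section Trapezoid

variable {E : Type*} [NormedAddCommGroup E] [NormedSpace ℝ E] [CompleteSpace E] {f f' : ℝ → E}

theorem norm_trapezoid_sub_integral_le {a b : ℝ} (hab : a ≤ b)
    (hf : ∀ x ∈ uIcc a b, HasDerivAt f (f' x) x) (hf' : IntervalIntegrable f' volume a b) :
    ‖((b - a) / 2) • (f a + f b) - ∫ x in a..b, f x‖ ≤ (b - a) / 2 * ∫ x in a..b, ‖f' x‖ := by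
  -- integrate by parts against the kernel `x - (a + b) / 2`, of size at most `(b - a) / 2`
  have hibp := intervalIntegral.integral_smul_deriv_eq_deriv_smul
    (u := fun x ↦ x - (a + b) / 2) (u' := fun _ ↦ 1)
    (fun x _ ↦ (hasDerivAt_id x).sub_const _) hf intervalIntegrable_const hf'
  have hkernel : ((b - a) / 2) • (f a + f b) - ∫ x in a..b, f x
      = ∫ x in a..b, (x - (a + b) / 2) • f' x := by
    rw [hibp]; simp only [one_smul]; module
  rw [hkernel, ← intervalIntegral.integral_const_mul]
  refine intervalIntegral.norm_integral_le_of_norm_le hab (ae_of_all _ fun x hx ↦ ?_)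
    (hf'.norm.const_mul _)
  rw [norm_smul, Real.norm_eq_abs]
  gcongr
  rw [abs_le]; constructor <;> linarith [hx.1, hx.2]

theorem uIcc_add_nat_subset {a : ℝ} {k N : ℕ} (hk : k < N) :
    uIcc (a + k) (a + k + 1) ⊆ uIcc a (a + N) := by
  have hk' : (k : ℝ) + 1 ≤ N := by exact_mod_cast hk
  have hk0 : (0 : ℝ) ≤ k := k.cast_nonneg
  rw [uIcc_of_le (by linarith), uIcc_of_le (by linarith)]
  exact Icc_subset_Icc (by linarith) (by linarith)

theorem sum_integral_unit_intervals {F : Type*} [NormedAddCommGroup F] [NormedSpace ℝ F]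
    {g : ℝ → F} {a : ℝ} {N : ℕ} (hg : IntervalIntegrable g volume a (a + N)) :
    ∑ k ∈ Finset.range N, ∫ x in a + k..a + k + 1, g x = ∫ x in a..a + N, g x := by
  simpa [add_assoc] using
    intervalIntegral.sum_integral_adjacent_intervals (a := fun k : ℕ ↦ a + k)
      fun k hk ↦ by simpa [add_assoc] using hg.mono_set (uIcc_add_nat_subset hk)

theorem norm_sum_trapezoid_sub_integral_le {a : ℝ} {N : ℕ}
    (hf : ∀ x ∈ uIcc a (a + N), HasDerivAt f (f' x) x)
    (hf' : IntervalIntegrable f' volume a (a + N)) :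
    ‖∑ k ∈ Finset.range N, (1 / 2 : ℝ) • (f (a + k) + f (a + k + 1)) - ∫ x in a..a + N, f x‖
      ≤ 1 / 2 * ∫ x in a..a + N, ‖f' x‖ := by
  have hfi : IntervalIntegrable f volume a (a + N) :=
    ContinuousOn.intervalIntegrable fun x hx ↦ (hf x hx).continuousAt.continuousWithinAt
  rw [← sum_integral_unit_intervals hfi, ← sum_integral_unit_intervals hf'.norm, Finset.mul_sum,
    ← Finset.sum_sub_distrib]
  refine (norm_sum_le _ _).trans (Finset.sum_le_sum fun k hk ↦ ?_)
  have hsub := uIcc_add_nat_subset (a := a) (Finset.mem_range.mp hk)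
  simpa using norm_trapezoid_sub_integral_le (by linarith)
    (fun x hx ↦ hf x (hsub hx)) (hf'.mono_set hsub)

end Trapezoid

theorem Real.tendsto_rpow_mul_log_atTop {r : ℝ} (hr : r < 0) :
    Tendsto (fun x : ℝ ↦ x ^ r * Real.log x) atTop (𝓝 0) := by
  refine ((isLittleO_log_rpow_atTop (neg_pos.mpr hr)).tendsto_div_nhds_zero).congr' ?_
  filter_upwards [eventually_gt_atTop 0] with x hx
  rw [Real.rpow_neg hx.le, div_eq_inv_mul, inv_inv]

theorem tendsto_ofReal_cpow_atTop {z : ℂ} (hz : z.re < 0) :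
    Tendsto (fun x : ℝ ↦ (x : ℂ) ^ z) atTop (𝓝 0) := by
  refine tendsto_zero_iff_norm_tendsto_zero.mpr
    ((tendsto_rpow_neg_atTop (neg_pos.mpr hz)).congr' ?_)
  filter_upwards [eventually_gt_atTop 0] with x hx
  rw [neg_neg, Complex.norm_cpow_eq_rpow_re_of_pos hx]

theorem tendsto_ofReal_cpow_mul_log_atTop {z : ℂ} (hz : z.re < 0) :
    Tendsto (fun x : ℝ ↦ (x : ℂ) ^ z * Real.log x) atTop (𝓝 0) := by
  refine tendsto_zero_iff_norm_tendsto_zero.mpr ((Real.tendsto_rpow_mul_log_atTop hz).congr' ?_)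
  filter_upwards [eventually_ge_atTop 1] with x hx
  rw [norm_mul, Complex.norm_cpow_eq_rpow_re_of_pos (by linarith), Complex.norm_real,
    Real.norm_of_nonneg (Real.log_nonneg hx)]

theorem hasDerivAt_ofReal_cpow_const_of_pos {t : ℝ} (ht : 0 < t) (c : ℂ) :
    HasDerivAt (fun x : ℝ ↦ (x : ℂ) ^ c) (c * (t : ℂ) ^ (c - 1)) t :=
  (Complex.hasStrictDerivAt_cpow_const (Complex.ofReal_mem_slitPlane.mpr ht)).hasDerivAt.comp_ofReal

theorem intervalIntegrable_one_add_mul_log_div_sq (c : ℝ) {x : ℝ} (hx : 1 ≤ x) :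
    IntervalIntegrable (fun t ↦ (1 + c * Real.log t) / t ^ 2) volume 1 x := by
  have hne : ∀ t ∈ uIcc 1 x, t ≠ 0 := fun t ht ↦ ((lt_min one_pos (by linarith)).trans_le ht.1).ne'
  exact ContinuousOn.intervalIntegrable (by fun_prop (disch := simpa))

theorem integral_one_add_mul_log_div_sq_le {c x : ℝ} (hc : 0 ≤ c) (hx : 1 ≤ x) :
    ∫ t in 1..x, (1 + c * Real.log t) / t ^ 2 ≤ 1 + c := by
  have hderiv : ∀ t ∈ uIcc 1 x, HasDerivAt (fun y ↦ -(1 + c + c * Real.log y) / y)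
      ((1 + c * Real.log t) / t ^ 2) t := fun t ht ↦ by
    have ht0 : t ≠ 0 := ((lt_min one_pos (by linarith)).trans_le ht.1).ne'
    refine ((((Real.hasDerivAt_log ht0).const_mul c).const_add (1 + c)).neg.div
      (hasDerivAt_id t) ht0).congr_deriv ?_
    simp only [Pi.neg_apply, id]
    field_simp
    ring
  rw [intervalIntegral.integral_eq_sub_of_hasDerivAt hderiv
    (intervalIntegrable_one_add_mul_log_div_sq c hx), Real.log_one]
  have : 0 ≤ (1 + c + c * Real.log x) / x :=
    div_nonneg (by nlinarith [Real.log_nonneg hx]) (by linarith)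
  linarith [neg_div x (1 + c + c * Real.log x)]

section LogCpow

variable {s : ℂ}

theorem hasDerivAt_ofReal_cpow_neg_mul_log {t : ℝ} (ht : 0 < t) :
    HasDerivAt (fun x : ℝ ↦ (x : ℂ) ^ (-s) * Real.log x)
      ((t : ℂ) ^ (-s - 1) * (1 - s * Real.log t)) t := by
  have ht' : (t : ℂ) ≠ 0 := by exact_mod_cast ht.ne'
  refine ((hasDerivAt_ofReal_cpow_const_of_pos ht (-s)).mul
    (Real.hasDerivAt_log ht.ne').ofReal_comp).congr_deriv ?_
  rw [show (t : ℂ) ^ (-s) = (t : ℂ) ^ (-s - 1) * t by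
    rw [Complex.cpow_sub _ _ ht', Complex.cpow_one, div_mul_cancel₀ _ ht']]
  push_cast
  field_simp
  ring

theorem integral_ofReal_cpow_neg_mul_log (hs : s ≠ 1) {x : ℝ} (hx : 0 < x) :
    ∫ t in 1..x, (t : ℂ) ^ (-s) * Real.log t
      = (x : ℂ) ^ (1 - s) * (Real.log x / (1 - s) - 1 / (1 - s) ^ 2) + 1 / (1 - s) ^ 2 := by
  have hpos : ∀ t ∈ uIcc 1 x, 0 < t := fun t ht ↦ (lt_min one_pos hx).trans_le ht.1
  have hderiv : ∀ t ∈ uIcc 1 x, HasDerivAt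
      (fun y : ℝ ↦ (y : ℂ) ^ (1 - s) * (Real.log y / (1 - s) - 1 / (1 - s) ^ 2))
      ((t : ℂ) ^ (-s) * Real.log t) t := fun t ht ↦ by
    have ht0 : (t : ℂ) ≠ 0 := by exact_mod_cast (hpos t ht).ne'
    refine ((hasDerivAt_ofReal_cpow_const_of_pos (hpos t ht) (1 - s)).mul
      (((Real.hasDerivAt_log (hpos t ht).ne').ofReal_comp.div_const (1 - s)).sub_const
        (1 / (1 - s) ^ 2))).congr_deriv ?_
    rw [show 1 - s - 1 = -s by ring, show (t : ℂ) ^ (1 - s) = (t : ℂ) ^ (-s) * t by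
      rw [sub_eq_neg_add, Complex.cpow_add _ _ ht0, Complex.cpow_one]]
    push_cast
    field_simp
    ring
  rw [intervalIntegral.integral_eq_sub_of_hasDerivAt hderiv]
  · simp
  · exact ContinuousOn.intervalIntegrable fun t ht ↦
      (hasDerivAt_ofReal_cpow_neg_mul_log (hpos t ht)).continuousAt.continuousWithinAt

theorem tendsto_integral_ofReal_cpow_neg_mul_log (hs : 1 < s.re) :
    Tendsto (fun x : ℝ ↦ ∫ t in 1..x, (t : ℂ) ^ (-s) * Real.log t) atTop
      (𝓝 (1 / (s - 1) ^ 2)) := by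
  have hs1 : s ≠ 1 := by rintro rfl; simp at hs
  have hre : (1 - s).re < 0 := by simp; linarith
  have hlim : Tendsto (fun x : ℝ ↦ (x : ℂ) ^ (1 - s) * Real.log x / (1 - s)
      - (x : ℂ) ^ (1 - s) / (1 - s) ^ 2 + 1 / (1 - s) ^ 2) atTop (𝓝 (1 / (1 - s) ^ 2)) := by
    simpa only [zero_div, sub_zero, zero_add] using
      (((tendsto_ofReal_cpow_mul_log_atTop hre).div_const (1 - s)).sub
        ((tendsto_ofReal_cpow_atTop hre).div_const ((1 - s) ^ 2))).add_const (1 / (1 - s) ^ 2)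
  rw [show (s - 1) ^ 2 = (1 - s) ^ 2 by ring]
  refine hlim.congr' ?_
  filter_upwards [eventually_gt_atTop 0] with x hx
  rw [integral_ofReal_cpow_neg_mul_log hs1 hx]
  ring

theorem norm_ofReal_cpow_neg_sub_one_mul_le (hs : 1 ≤ s.re) {t : ℝ} (ht : 1 ≤ t) :
    ‖(t : ℂ) ^ (-s - 1) * (1 - s * Real.log t)‖ ≤ (1 + ‖s‖ * Real.log t) / t ^ 2 := by
  have ht0 : 0 < t := by linarith
  rw [norm_mul, Complex.norm_cpow_eq_rpow_re_of_pos ht0, div_eq_inv_mul, ← Real.rpow_natCast,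
    ← Real.rpow_neg ht0.le]
  refine mul_le_mul (Real.rpow_le_rpow_of_exponent_le ht (by simp; linarith)) ?_
    (norm_nonneg _) (Real.rpow_nonneg ht0.le _)
  calc ‖1 - s * Real.log t‖ ≤ ‖(1 : ℂ)‖ + ‖s * Real.log t‖ := norm_sub_le _ _
    _ = 1 + ‖s‖ * Real.log t := by
      rw [norm_one, norm_mul, Complex.norm_real, Real.norm_of_nonneg (Real.log_nonneg ht)]

theorem intervalIntegrable_ofReal_cpow_neg_sub_one_mul {x : ℝ} (hx : 1 ≤ x) :
    IntervalIntegrable (fun t : ℝ ↦ (t : ℂ) ^ (-s - 1) * (1 - s * Real.log t)) volume 1 x := by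
  refine ContinuousOn.intervalIntegrable fun t ht ↦ ContinuousAt.continuousWithinAt ?_
  have ht0 : 0 < t := (lt_min one_pos (by linarith)).trans_le ht.1
  exact (hasDerivAt_ofReal_cpow_const_of_pos ht0 _).continuousAt.mul (continuousAt_const.sub
    (continuousAt_const.mul (Complex.continuous_ofReal.continuousAt.comp
      (Real.continuousAt_log ht0.ne'))))

theorem integral_norm_ofReal_cpow_neg_sub_one_mul_le (hs : 1 ≤ s.re) {x : ℝ} (hx : 1 ≤ x) :
    ∫ t in 1..x, ‖(t : ℂ) ^ (-s - 1) * (1 - s * Real.log t)‖ ≤ 1 + ‖s‖ :=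
  (intervalIntegral.integral_mono_on hx (intervalIntegrable_ofReal_cpow_neg_sub_one_mul hx).norm
    (intervalIntegrable_one_add_mul_log_div_sq _ hx)
    fun _ ht ↦ norm_ofReal_cpow_neg_sub_one_mul_le hs ht.1).trans
    (integral_one_add_mul_log_div_sq_le (norm_nonneg s) hx)

theorem hasSum_neg_deriv_riemannZeta (hs : 1 < s.re) :
    HasSum (fun n : ℕ ↦ ((n + 1 : ℝ) : ℂ) ^ (-s) * Real.log (n + 1)) (-deriv riemannZeta s) := by
  have habs : LSeries.abscissaOfAbsConv 1 < s.re := by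
    rw [LSeries.abscissaOfAbsConv_one]; exact_mod_cast hs
  have hzeta : deriv riemannZeta s = deriv (LSeries 1) s :=
    Filter.EventuallyEq.deriv_eq <| Filter.eventuallyEq_of_mem
      ((isOpen_lt continuous_const Complex.continuous_re).mem_nhds hs)
      fun z hz ↦ (LSeries_one_eq_riemannZeta hz).symm
  rw [hzeta, LSeries_deriv habs, neg_neg]
  have hshift := (hasSum_nat_add_iff' 1).mpr (LSeriesSummable_logMul_of_lt_re habs).LSeriesHasSum
  simp only [Finset.range_one, Finset.sum_singleton, LSeries.term_zero, sub_zero] at hshift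
  refine hshift.congr_fun fun n ↦ ?_
  have hlog : (Real.log (n + 1) : ℂ) = Complex.log (n + 1) := by
    rw [Complex.ofReal_log (by positivity)]; push_cast; rfl
  rw [LSeries.term_of_ne_zero n.succ_ne_zero]
  simp [LSeries.logMul, Complex.cpow_neg, div_eq_inv_mul, hlog]

end LogCpow

/-- For every complex number `s` with `Re(s) > 1`,
`|ζ'(s) + 1/(s−1)²| ≤ (1 + |s|)/2`. -/
theorem zeta_deriv_bound (s : ℂ) (hs : 1 < s.re) :
    ‖deriv riemannZeta s + 1 / (s - 1) ^ 2‖ ≤ (1 + ‖s‖) / 2 := by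
  set g : ℝ → ℂ := fun t ↦ (t : ℂ) ^ (-s) * Real.log t
  set L := -deriv riemannZeta s
  have hsum : HasSum (fun n : ℕ ↦ g (1 + n)) L := by
    simpa only [g, add_comm (1 : ℝ)] using hasSum_neg_deriv_riemannZeta hs
  have htrap : HasSum (fun k : ℕ ↦ (1 / 2 : ℝ) • (g (1 + k) + g (1 + k + 1))) L := by
    have hshift := (hasSum_nat_add_iff' 1).mpr hsum
    simp only [Nat.cast_add, Nat.cast_one, ← add_assoc, Finset.range_one, Finset.sum_singleton,
      Nat.cast_zero, add_zero, g, Complex.ofReal_one, Real.log_one, Complex.ofReal_zero, mul_zero,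
      sub_zero] at hshift
    simpa only [smul_add, ← add_smul, add_halves, one_smul] using
      (hsum.add hshift).const_smul (1 / 2 : ℝ)
  have hint : Tendsto (fun N : ℕ ↦ ∫ t in 1..1 + N, g t) atTop (𝓝 (1 / (s - 1) ^ 2)) :=
    (tendsto_integral_ofReal_cpow_neg_mul_log hs).comp
      (tendsto_atTop_add_const_left _ 1 tendsto_natCast_atTop_atTop)
  have hbound (N : ℕ) : ‖∑ k ∈ Finset.range N, (1 / 2 : ℝ) • (g (1 + k) + g (1 + k + 1))
      - ∫ t in 1..1 + N, g t‖ ≤ (1 + ‖s‖) / 2 := by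
    have hN : (1 : ℝ) ≤ 1 + N := le_add_of_nonneg_right N.cast_nonneg
    refine (norm_sum_trapezoid_sub_integral_le (fun t ht ↦ hasDerivAt_ofReal_cpow_neg_mul_log
      ((lt_min one_pos (by linarith)).trans_le ht.1))
      (intervalIntegrable_ofReal_cpow_neg_sub_one_mul hN)).trans ?_
    linarith [integral_norm_ofReal_cpow_neg_sub_one_mul_le hs.le hN]
  have hlim := le_of_tendsto' (htrap.tendsto_sum_nat.sub hint).norm hbound
  rwa [show deriv riemannZeta s + 1 / (s - 1) ^ 2 = -(L - 1 / (s - 1) ^ 2) by ring, norm_neg]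
end

section
/- Let x ≥ e² and set α = 2/log x. Then ∫_{√x}^{x} dt/(t^{1−2α}·(log t)²) ≤ 37.8/(α·(log x)²). -/
/-!
The substitution `t = x ^ v` turns the integral into `(log x)⁻¹ ∫_{1/2}^{1} e^{4v} / v² dv`,
because `α log x = 2`; the right-hand side is `18.9 / log x`. The remaining integral is about
`18.8865`, so the bound needs some precision: writing `e^{4v} = e³ e^{4v-3}` with
`|4v - 3| ≤ 1`, the Taylor bound for `exp` on `[-1, 1]` leaves an integrand with an explicit
primitive, and its value at `1` and `1/2` is checked against the decimal bounds on `e` and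
`log 2`.
-/

open Real Set intervalIntegral

/-- At `v = 0`, i.e. `t = 1`, both integrands are `0` by the convention `y / 0 = 0`. -/
theorem integral_one_div_rpow_mul_log_sq {x : ℝ} (hx : 1 < x) (a b c : ℝ) :
    ∫ t in x ^ a..x ^ b, 1 / (t ^ (1 - c) * log t ^ 2) =
      (log x)⁻¹ * ∫ v in a..b, exp (c * log x * v) / v ^ 2 := by
  have hx0 : 0 < x := by linarith
  have hL : 0 < log x := log_pos hx
  have hderiv (v : ℝ) : HasDerivAt (x ^ ·) (x ^ v * log x) v :=
    (hasStrictDerivAt_const_rpow hx0 v).hasDerivAt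
  rw [← integral_comp_mul_deriv_of_deriv_nonneg (HasDerivAt.continuousOn fun v _ ↦ hderiv v)
    (fun v _ ↦ hderiv v) (fun v _ ↦ by positivity), ← integral_const_mul]
  refine integral_congr fun v _ ↦ ?_
  simp only [Function.comp_apply]
  rw [← rpow_mul hx0.le, log_rpow hx0, rpow_def_of_pos hx0, rpow_def_of_pos hx0,
    show c * log x * v = log x * v - log x * (v * (1 - c)) by ring, exp_sub]
  field_simp

/-- The constant `1 / 4410 = 8 / (7! * 7)` is the remainder bound of `Real.exp_bound`. -/
noncomputable def expTaylorBound (u : ℝ) : ℝ :=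
  ∑ m ∈ Finset.range 7, u ^ m / m.factorial + 1 / 4410

lemma exp_le_expTaylorBound {u : ℝ} (hu : |u| ≤ 1) : exp u ≤ expTaylorBound u := by
  have h := (abs_sub_le_iff.1 (Real.exp_bound hu (n := 7) (by norm_num))).1
  have hpow : |u| ^ 7 ≤ 1 := pow_le_one₀ (abs_nonneg u) hu
  norm_num [Nat.factorial] at h
  unfold expTaylorBound
  linarith

noncomputable def expTaylorBoundPrimitive (v : ℝ) : ℝ :=
  -12797 / 35280 * v⁻¹ - 13 / 5 * log v + 11 * v - 32 / 3 * v ^ 2 + 80 / 9 * v ^ 3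
    - 64 / 15 * v ^ 4 + 256 / 225 * v ^ 5

lemma hasDerivAt_expTaylorBoundPrimitive {v : ℝ} (hv : v ≠ 0) :
    HasDerivAt expTaylorBoundPrimitive (expTaylorBound (4 * v - 3) / v ^ 2) v := by
  have h := (((((((hasDerivAt_inv hv).const_mul (-12797 / 35280 : ℝ)).sub
    ((hasDerivAt_log hv).const_mul (13 / 5 : ℝ))).add
    ((hasDerivAt_id' v).const_mul (11 : ℝ))).sub
    ((hasDerivAt_pow 2 v).const_mul (32 / 3 : ℝ))).add
    ((hasDerivAt_pow 3 v).const_mul (80 / 9 : ℝ))).sub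
    ((hasDerivAt_pow 4 v).const_mul (64 / 15 : ℝ))).add
    ((hasDerivAt_pow 5 v).const_mul (256 / 225 : ℝ))
  refine h.congr_deriv ?_
  simp only [expTaylorBound, Finset.sum_range_succ, Nat.factorial]
  field_simp
  ring

lemma exp_three_lt_d4 : exp 3 < 20.0856 := by
  rw [show (3 : ℝ) = 1 + 1 + 1 by norm_num, exp_add, exp_add]
  nlinarith [exp_one_lt_d9, exp_pos 1]

lemma integral_exp_four_mul_div_sq_le :
    ∫ v in (1 / 2 : ℝ)..1, exp (4 * v) / v ^ 2 ≤ 18.9 := by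
  have hne : ∀ v ∈ uIcc (1 / 2 : ℝ) 1, v ^ 2 ≠ 0 := fun v hv ↦ by
    rw [uIcc_of_le (by norm_num)] at hv
    exact pow_ne_zero 2 (by linarith [hv.1])
  have hderiv (v) (hv : v ∈ uIcc (1 / 2 : ℝ) 1) :=
    hasDerivAt_expTaylorBoundPrimitive (pow_ne_zero_iff two_ne_zero |>.1 (hne v hv))
  have hint : IntervalIntegrable (fun v ↦ exp (4 * v) / v ^ 2)
      MeasureTheory.volume (1 / 2 : ℝ) 1 :=
    (ContinuousOn.div (by fun_prop) (by fun_prop) hne).intervalIntegrable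
  have hint' : IntervalIntegrable (fun v ↦ expTaylorBound (4 * v - 3) / v ^ 2)
      MeasureTheory.volume (1 / 2 : ℝ) 1 :=
    (ContinuousOn.div (by unfold expTaylorBound; fun_prop) (by fun_prop) hne).intervalIntegrable
  calc ∫ v in (1 / 2 : ℝ)..1, exp (4 * v) / v ^ 2
      ≤ ∫ v in (1 / 2 : ℝ)..1, exp 3 * (expTaylorBound (4 * v - 3) / v ^ 2) := by
        refine integral_mono_on (by norm_num) hint (hint'.const_mul _) fun v hv ↦ ?_
        rw [← mul_div_assoc,
          show exp (4 * v) = exp 3 * exp (4 * v - 3) by rw [← exp_add]; ring_nf]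
        gcongr
        exact exp_le_expTaylorBound (abs_le.2 ⟨by linarith [hv.1], by linarith [hv.2]⟩)
    _ = exp 3 * (expTaylorBoundPrimitive 1 - expTaylorBoundPrimitive (1 / 2)) := by
        rw [intervalIntegral.integral_const_mul, integral_eq_sub_of_hasDerivAt hderiv hint']
    _ ≤ 18.9 := by
        simp only [expTaylorBoundPrimitive, one_div, log_inv, log_one]
        nlinarith [exp_pos 3, exp_three_lt_d4, log_two_gt_d9]

/-- For `x ≥ e²` and `α = 2 / log x`,
`∫_{√x}^{x} dt / (t^{1−2α} (log t)²) ≤ 37.8 / (α (log x)²)`. -/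
theorem integral_bound (x α : ℝ) (hx : Real.exp 2 ≤ x) (hα : α = 2 / Real.log x) :
    ∫ t in Real.sqrt x..x, 1 / (t ^ (1 - 2 * α) * (Real.log t) ^ 2) ≤
      37.8 / (α * (Real.log x) ^ 2) := by
  have hx1 : 1 < x := by linarith [add_one_le_exp 2]
  have hlog : 0 < log x := log_pos hx1
  have hαlog : 2 * α * log x = 4 := by rw [hα]; field_simp; norm_num
  have hsubst := integral_one_div_rpow_mul_log_sq hx1 (1 / 2) 1 (2 * α)
  rw [← sqrt_eq_rpow, rpow_one, hαlog] at hsubst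
  rw [hsubst, show 37.8 / (α * log x ^ 2) = (log x)⁻¹ * 18.9 by rw [hα]; field_simp; norm_num]
  exact mul_le_mul_of_nonneg_left integral_exp_four_mul_div_sq_le (by positivity)
end

section
/- Let f : ℝ → ℝ be 2π-periodic and of bounded variation on [0, 2π], with total variation V := ∫₀^{2π} |d f(t)| and mean value f̄ := (1/2π)·∫₀^{2π} f(t) dt. Then for all real numbers a, b with 0 < a < b, |∫_a^b (f(t) − f̄)·(1/t) dt| ≤ (π/2)·V/a. -/
open MeasureTheory Set Function
open scoped Interval

/-!
Put `g = f - f̄`. Any two points of the circle `ℝ / 2πℤ` are joined by two complementary arcs,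
and `f` must cover the distance between their values along each, so `|g| ≤ V / 2`. As `g` has mean
zero, its primitive `G` is `2π`-periodic and `(V / 2)`-Lipschitz; averaging `|G t - G s|` over a
period centred at `t` shows that `G` stays within `πV / 4` of its mean `c`. Integrating by parts,
`∫_a^b g / t = [(G - c) / t]_a^b + ∫_a^b (G - c) / t²`, and the three terms are at most
`πV / (4b)`, `πV / (4a)` and `πV / 4 · (1/a - 1/b)`.
-/

theorem eVariationOn_Icc_add_Icc_add_Icc {E : Type*} [PseudoEMetricSpace E] (f : ℝ → E)
    {a b c d : ℝ} (hab : a ≤ b) (hbc : b ≤ c) (hcd : c ≤ d) :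
    eVariationOn f (Icc a b) + eVariationOn f (Icc b c) + eVariationOn f (Icc c d) =
      eVariationOn f (Icc a d) := by
  have h := eVariationOn.Icc_add_Icc f (s := univ) hab hbc (mem_univ _)
  have h' := eVariationOn.Icc_add_Icc f (s := univ) (hab.trans hbc) hcd (mem_univ _)
  simp only [univ_inter] at h h'
  rw [h, h']

theorem Function.Periodic.two_mul_edist_le_eVariationOn {E : Type*} [PseudoEMetricSpace E]
    {f : ℝ → E} {T : ℝ} (hf : Periodic f T) (hT : 0 < T) (s t : ℝ) :
    2 * edist (f s) (f t) ≤ eVariationOn f (Icc 0 T) := by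
  obtain ⟨u, hu, hsu⟩ := hf.exists_mem_Ico₀ hT s
  obtain ⟨v, hv, htv⟩ := hf.exists_mem_Ico₀ hT t
  rw [hsu, htv]
  clear hsu htv
  wlog huv : u ≤ v generalizing u v
  · rw [edist_comm]; exact this v hv u hu (le_of_not_ge huv)
  have hT0 : f T = f 0 := by simpa using hf 0
  have inner : edist (f u) (f v) ≤ eVariationOn f (Icc u v) :=
    eVariationOn.edist_le f (left_mem_Icc.2 huv) (right_mem_Icc.2 huv)
  have outer : edist (f u) (f v) ≤ eVariationOn f (Icc 0 u) + eVariationOn f (Icc v T) :=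
    calc edist (f u) (f v) ≤ edist (f 0) (f u) + edist (f T) (f v) := by
          rw [hT0, edist_comm (f 0)]; exact edist_triangle _ _ _
      _ ≤ _ := add_le_add (eVariationOn.edist_le f (left_mem_Icc.2 hu.1) (right_mem_Icc.2 hu.1))
          (eVariationOn.edist_le f (right_mem_Icc.2 hv.2.le) (left_mem_Icc.2 hv.2.le))
  calc 2 * edist (f u) (f v) ≤ eVariationOn f (Icc u v) +
        (eVariationOn f (Icc 0 u) + eVariationOn f (Icc v T)) := by
        rw [two_mul]; exact add_le_add inner outer
    _ = eVariationOn f (Icc 0 T) := by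
        rw [← eVariationOn_Icc_add_Icc_add_Icc f hu.1 huv hv.2.le]; ring

theorem Function.Periodic.abs_sub_le_eVariationOn_toReal {f : ℝ → ℝ} {T : ℝ}
    (hf : Periodic f T) (hT : 0 < T) (hbv : BoundedVariationOn f (Icc 0 T)) (s t : ℝ) :
    |f s - f t| ≤ (eVariationOn f (Icc 0 T)).toReal / 2 := by
  have h := ENNReal.toReal_mono hbv (hf.two_mul_edist_le_eVariationOn hT s t)
  rw [ENNReal.toReal_mul, edist_dist, ENNReal.toReal_ofReal dist_nonneg, Real.dist_eq] at h
  norm_num at h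
  linarith

theorem BoundedVariationOn.intervalIntegrable {f : ℝ → ℝ} {a b : ℝ}
    (hf : BoundedVariationOn f (uIcc a b)) : IntervalIntegrable f volume a b := by
  obtain ⟨p, q, hp, hq, rfl⟩ := hf.locallyBoundedVariationOn.exists_monotoneOn_sub_monotoneOn
  exact hp.intervalIntegrable.sub hq.intervalIntegrable

theorem abs_sub_average_le_integral_abs_sub {f : ℝ → ℝ} {a b : ℝ} (hab : a < b)
    (hf : IntervalIntegrable f volume a b) (x : ℝ) :
    |f x - 1 / (b - a) * ∫ y in a..b, f y| ≤ 1 / (b - a) * ∫ y in a..b, |f x - f y| := by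
  have hba : 0 < b - a := sub_pos.2 hab
  have h : f x - 1 / (b - a) * ∫ y in a..b, f y = 1 / (b - a) * ∫ y in a..b, (f x - f y) := by
    rw [intervalIntegral.integral_sub intervalIntegrable_const hf, intervalIntegral.integral_const,
      smul_eq_mul]
    field_simp
  rw [h, abs_mul, abs_of_pos (one_div_pos.2 hba)]
  gcongr
  exact intervalIntegral.abs_integral_le_integral_abs hab.le

theorem abs_sub_average_le_of_forall_abs_sub_le {f : ℝ → ℝ} {a b K x : ℝ} (hab : a < b)
    (hf : IntervalIntegrable f volume a b) (hK : ∀ y ∈ Icc a b, |f x - f y| ≤ K) :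
    |f x - 1 / (b - a) * ∫ y in a..b, f y| ≤ K := by
  refine (abs_sub_average_le_integral_abs_sub hab hf x).trans ?_
  have hba : 0 < b - a := sub_pos.2 hab
  have : ∫ y in a..b, |f x - f y| ≤ ∫ _ in a..b, K :=
    intervalIntegral.integral_mono_on hab.le (intervalIntegrable_const.sub hf).abs
      intervalIntegrable_const hK
  rw [intervalIntegral.integral_const, smul_eq_mul] at this
  calc 1 / (b - a) * ∫ y in a..b, |f x - f y| ≤ 1 / (b - a) * ((b - a) * K) := by gcongr
    _ = K := by field_simp

theorem integral_sub_average_eq_zero {f : ℝ → ℝ} {T : ℝ} (hT : T ≠ 0)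
    (hf : IntervalIntegrable f volume 0 T) :
    ∫ t in 0..T, (f t - 1 / T * ∫ s in 0..T, f s) = 0 := by
  rw [intervalIntegral.integral_sub hf intervalIntegrable_const, intervalIntegral.integral_const,
    smul_eq_mul, sub_zero]
  field_simp
  ring

theorem Function.Periodic.abs_sub_average_le_eVariationOn_toReal {f : ℝ → ℝ} {T : ℝ}
    (hf : Periodic f T) (hT : 0 < T) (hbv : BoundedVariationOn f (Icc 0 T)) (t : ℝ) :
    |f t - 1 / T * ∫ s in 0..T, f s| ≤ (eVariationOn f (Icc 0 T)).toReal / 2 := by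
  simpa using abs_sub_average_le_of_forall_abs_sub_le hT
    (BoundedVariationOn.intervalIntegrable (uIcc_of_le hT.le ▸ hbv))
    fun s _ => hf.abs_sub_le_eVariationOn_toReal hT hbv t s

theorem integral_abs_sub_center {c : ℝ} (hc : 0 ≤ c) (t : ℝ) :
    ∫ y in t - c..t + c, |y - t| = c ^ 2 := by
  rw [intervalIntegral.integral_comp_sub_right (fun y => |y|), sub_sub_cancel_left,
    add_sub_cancel_left, ← intervalIntegral.integral_add_adjacent_intervals (b := 0)
      (continuous_abs.intervalIntegrable _ _) (continuous_abs.intervalIntegrable _ _)]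
  have hneg : ∫ y in -c..0, |y| = ∫ y in -c..0, -y :=
    intervalIntegral.integral_congr fun y hy => abs_of_nonpos (by
      rw [uIcc_of_le (by linarith)] at hy; exact hy.2)
  have hpos : ∫ y in 0..c, |y| = ∫ y in 0..c, y :=
    intervalIntegral.integral_congr fun y hy => abs_of_nonneg (by
      rw [uIcc_of_le hc] at hy; exact hy.1)
  rw [hneg, hpos, intervalIntegral.integral_neg, integral_id, integral_id]
  ring

theorem Function.Periodic.abs_sub_average_le_of_lipschitzWith {G : ℝ → ℝ} {T : ℝ}
    {K : NNReal} (hG : Periodic G T) (hT : 0 < T) (hK : LipschitzWith K G) (t : ℝ) :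
    |G t - 1 / T * ∫ s in 0..T, G s| ≤ K * T / 4 := by
  have hmean : ∫ s in 0..T, G s = ∫ s in t - T / 2..t + T / 2, G s := by
    simpa [show t - T / 2 + T = t + T / 2 by ring] using
      hG.intervalIntegral_add_eq 0 (t - T / 2)
  have hlen : t + T / 2 - (t - T / 2) = T := by ring
  have hint : IntervalIntegrable G volume (t - T / 2) (t + T / 2) :=
    hK.continuous.intervalIntegrable _ _
  have h := abs_sub_average_le_integral_abs_sub (by linarith) hint t
  rw [hlen, ← hmean] at h
  refine h.trans ?_
  have hbound : ∫ s in t - T / 2..t + T / 2, |G t - G s| ≤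
      ∫ s in t - T / 2..t + T / 2, K * |s - t| := by
    refine intervalIntegral.integral_mono_on (by linarith) (intervalIntegrable_const.sub hint).abs
      (Continuous.intervalIntegrable (by fun_prop) _ _) fun s _ => ?_
    rw [abs_sub_comm, ← Real.dist_eq, ← Real.dist_eq]
    exact hK.dist_le_mul s t
  rw [intervalIntegral.integral_const_mul, integral_abs_sub_center (half_pos hT).le] at hbound
  calc 1 / T * ∫ s in t - T / 2..t + T / 2, |G t - G s| ≤ 1 / T * (K * (T / 2) ^ 2) := by
        gcongr
    _ = K * T / 4 := by field_simp; ring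

theorem lipschitzWith_primitive {E : Type*} [NormedAddCommGroup E] [NormedSpace ℝ E]
    {g : ℝ → E} {K : NNReal} (hg : ∀ x y, IntervalIntegrable g volume x y)
    (hK : ∀ t, ‖g t‖ ≤ K) (a : ℝ) : LipschitzWith K fun x => ∫ t in a..x, g t :=
  LipschitzWith.of_dist_le_mul fun x y => by
    rw [dist_eq_norm, intervalIntegral.integral_interval_sub_left (hg a x) (hg a y),
      Real.dist_eq]
    exact intervalIntegral.norm_integral_le_of_norm_le_const fun t _ => hK t

theorem Function.Periodic.periodic_primitive {E : Type*} [NormedAddCommGroup E] [NormedSpace ℝ E]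
    {g : ℝ → E} {T : ℝ} (hg : Periodic g T) (hint : ∀ x y, IntervalIntegrable g volume x y)
    (hmean : ∫ t in 0..T, g t = 0) : Periodic (fun x => ∫ t in 0..x, g t) T := fun x => by
  dsimp only
  rw [hg.intervalIntegral_add_eq_add 0 x hint, zero_add, hmean, add_zero]

theorem ne_zero_of_mem_uIcc {a b x : ℝ} (ha : 0 < a) (hab : a ≤ b) (hx : x ∈ [[a, b]]) :
    x ≠ 0 :=
  (ha.trans_le (uIcc_of_le hab ▸ hx).1).ne'

theorem integral_inv_sq {a b : ℝ} (ha : 0 < a) (hab : a ≤ b) :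
    ∫ x in a..b, (x ^ 2)⁻¹ = a⁻¹ - b⁻¹ := by
  have hpos : ∀ x ∈ [[a, b]], x ≠ 0 := fun x => ne_zero_of_mem_uIcc ha hab
  rw [intervalIntegral.integral_eq_sub_of_hasDerivAt (f := fun x => -x⁻¹)
    (f' := fun x => (x ^ 2)⁻¹)
    (fun x hx => by simpa using (hasDerivAt_inv (hpos x hx)).fun_neg)
    ((continuousOn_pow 2).inv₀ fun x hx => pow_ne_zero 2 (hpos x hx)).intervalIntegrable]
  ring

theorem AbsolutelyContinuousOnInterval.integral_deriv_div_eq {H : ℝ → ℝ} {a b : ℝ}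
    (hH : AbsolutelyContinuousOnInterval H a b) (ha : 0 < a) (hab : a ≤ b) :
    ∫ x in a..b, deriv H x / x = H b / b - H a / a + ∫ x in a..b, H x / x ^ 2 := by
  have hpos : ∀ x ∈ [[a, b]], x ≠ 0 := fun x => ne_zero_of_mem_uIcc ha hab
  have hinv : AbsolutelyContinuousOnInterval (fun x : ℝ => x⁻¹) a b :=
    ((contDiffOn_inv ℝ).mono hpos).absolutelyContinuousOnInterval
  have hparts := hH.integral_deriv_mul_eq_sub hinv
  simp only [deriv_inv, mul_neg, ← sub_eq_add_neg] at hparts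
  rw [intervalIntegral.integral_sub] at hparts
  · simp only [div_eq_mul_inv] at hparts ⊢
    linarith
  · exact hH.intervalIntegrable_deriv.mul_continuousOn (continuousOn_inv₀.mono hpos)
  · exact (hH.continuousOn.mul
      ((continuousOn_pow 2).inv₀ fun x hx => pow_ne_zero 2 (hpos x hx))).intervalIntegrable

theorem abs_integral_div_le_of_abs_primitive_sub_le {g : ℝ → ℝ} {a b C M : ℝ} (ha : 0 < a)
    (hab : a ≤ b) (hg : IntervalIntegrable g volume a b)
    (hM : ∀ x ∈ Icc a b, |(∫ t in a..x, g t) - C| ≤ M) :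
    |∫ x in a..b, g x / x| ≤ 2 * M / a := by
  set H : ℝ → ℝ := fun x => (∫ t in a..x, g t) - C
  have hH : AbsolutelyContinuousOnInterval H a b :=
    (hg.absolutelyContinuousOnInterval_intervalIntegral left_mem_uIcc).sub
      contDiffOn_const.absolutelyContinuousOnInterval
  have hderiv : ∀ᵐ x, x ∈ Ι a b → g x / x = deriv H x / x := by
    filter_upwards [hg.ae_hasDerivAt_integral] with x hx hxab
    rw [((hx (uIoc_subset_uIcc hxab) a left_mem_uIcc).sub_const C).deriv]
  rw [intervalIntegral.integral_congr_ae hderiv, hH.integral_deriv_div_eq ha hab]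
  have hb : 0 < b := ha.trans_le hab
  have hrest : |∫ x in a..b, H x / x ^ 2| ≤ M * (a⁻¹ - b⁻¹) := by
    have hpos : ∀ x ∈ [[a, b]], x ≠ 0 := fun x => ne_zero_of_mem_uIcc ha hab
    have hinv_sq : ContinuousOn (fun x : ℝ => (x ^ 2)⁻¹) [[a, b]] :=
      (continuousOn_pow 2).inv₀ fun x hx => pow_ne_zero 2 (hpos x hx)
    calc |∫ x in a..b, H x / x ^ 2| ≤ ∫ x in a..b, |H x / x ^ 2| :=
          intervalIntegral.abs_integral_le_integral_abs hab
      _ ≤ ∫ x in a..b, M * (x ^ 2)⁻¹ := by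
          refine intervalIntegral.integral_mono_on hab ?_
            (continuousOn_const.mul hinv_sq).intervalIntegrable fun x hx => ?_
          · simp only [div_eq_mul_inv]
            exact (hH.continuousOn.mul hinv_sq).intervalIntegrable.abs
          · rw [abs_div, abs_of_pos (pow_pos (ha.trans_le hx.1) 2), div_eq_mul_inv]
            gcongr
            exact hM x hx
      _ = M * (a⁻¹ - b⁻¹) := by
          rw [intervalIntegral.integral_const_mul, integral_inv_sq ha hab]
  have hHa : |H a / a| ≤ M / a := by
    rw [abs_div, abs_of_pos ha]; gcongr; exact hM a (left_mem_Icc.2 hab)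
  have hHb : |H b / b| ≤ M / b := by
    rw [abs_div, abs_of_pos hb]; gcongr; exact hM b (right_mem_Icc.2 hab)
  calc |H b / b - H a / a + ∫ x in a..b, H x / x ^ 2|
      ≤ |H b / b| + |H a / a| + |∫ x in a..b, H x / x ^ 2| := by
        linarith [abs_add_le (H b / b - H a / a) (∫ x in a..b, H x / x ^ 2),
          abs_sub (H b / b) (H a / a)]
    _ ≤ M / b + M / a + M * (a⁻¹ - b⁻¹) := by gcongr
    _ = 2 * M / a := by ring

theorem Function.Periodic.abs_integral_div_le {g : ℝ → ℝ} {T K a b : ℝ} (hg : Periodic g T)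
    (hT : 0 < T) (hint : ∀ x y, IntervalIntegrable g volume x y) (hmean : ∫ t in 0..T, g t = 0)
    (hK : ∀ t, |g t| ≤ K) (ha : 0 < a) (hab : a ≤ b) :
    |∫ x in a..b, g x / x| ≤ K * T / (2 * a) := by
  have hK0 : 0 ≤ K := (abs_nonneg _).trans (hK 0)
  have hlip : LipschitzWith K.toNNReal fun x => ∫ t in 0..x, g t :=
    lipschitzWith_primitive hint (fun t => by rw [Real.coe_toNNReal _ hK0]; exact hK t) 0
  have hM := (hg.periodic_primitive hint hmean).abs_sub_average_le_of_lipschitzWith hT hlip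
  rw [Real.coe_toNNReal _ hK0] at hM
  calc |∫ x in a..b, g x / x| ≤ 2 * (K * T / 4) / a := by
        refine abs_integral_div_le_of_abs_primitive_sub_le ha hab (hint a b)
          (C := 1 / T * (∫ x in 0..T, ∫ t in 0..x, g t) - ∫ t in 0..a, g t) fun x _ => ?_
        rw [← intervalIntegral.integral_interval_sub_left (hint 0 x) (hint 0 a),
          sub_sub_sub_cancel_right]
        exact hM x
    _ = K * T / (2 * a) := by ring

/-- For a `2π`-periodic function `f` of bounded variation on `[0, 2π]` with total
variation `V` and mean value `f̄`, and `0 < a < b`,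
`|∫_a^b (f(t) − f̄)/t dt| ≤ (π/2) V / a`. -/
theorem bounded_variation_integral_bound (f : ℝ → ℝ)
    (hper : ∀ t : ℝ, f (t + 2 * Real.pi) = f t)
    (hbv : BoundedVariationOn f (Set.Icc 0 (2 * Real.pi)))
    (V fbar : ℝ)
    (hV : V = (eVariationOn f (Set.Icc 0 (2 * Real.pi))).toReal)
    (hfbar : fbar = 1 / (2 * Real.pi) * ∫ t in (0:ℝ)..(2 * Real.pi), f t)
    (a b : ℝ) (ha : 0 < a) (hab : a < b) :
    |∫ t in a..b, (f t - fbar) * (1 / t)| ≤ Real.pi / 2 * V / a := by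
  have hT : 0 < 2 * Real.pi := Real.two_pi_pos
  have hf : Periodic f (2 * Real.pi) := hper
  have hfi : ∀ x y, IntervalIntegrable f volume x y :=
    hf.intervalIntegrable₀ hT.ne'
      (BoundedVariationOn.intervalIntegrable (uIcc_of_le hT.le ▸ hbv))
  have hbound := Periodic.abs_integral_div_le (g := fun t => f t - fbar) (K := V / 2)
    (fun t => by simp only [hf t]) hT (fun x y => (hfi x y).sub intervalIntegrable_const)
    (hfbar ▸ integral_sub_average_eq_zero hT.ne' (hfi 0 _))
    (fun t => hV ▸ hfbar ▸ hf.abs_sub_average_le_eVariationOn_toReal hT hbv t) ha hab.le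
  simp_rw [mul_one_div]
  convert hbound using 1
  ring
end

section
/- Let g : ℕ → ℝ be completely multiplicative with |g(n)| ≤ 1 for all n, and let F(s) := Σ_{n=1}^∞ g(n)·n^{−s}. Then for every complex s with Re(s) > 1, |F(s)| ≤ exp(γ − M)·exp( Re( Σ_{p prime} g(p)/p^{s} ) ), where γ is the Euler–Mascheroni constant and M is the Meissel–Mertens constant. -/
/-!
By the Euler product, `F(s) = exp (∑_p -log (1 - f p))` with `f p = g p / p ^ s`, so
`log ‖F(s)‖ = ∑_p -log ‖1 - f p‖`. Comparing the Taylor series `-log (1 - z) = ∑ zⁿ / n` beyond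
its linear term with the same series at `r = 1 / p ≥ ‖f p‖` gives
`-log ‖1 - f p‖ ≤ Re (f p) + (-log (1 - 1 / p) - 1 / p)`, and these constants sum to `γ - M`.
-/

open Complex

lemma hasSum_re_pow_div_add_two {z : ℂ} (hz : ‖z‖ < 1) :
    HasSum (fun n : ℕ ↦ (z ^ (n + 2) / (n + 2 : ℕ)).re) (-Real.log ‖1 - z‖ - z.re) := by
  have h := (hasSum_nat_add_iff' 2).mpr (hasSum_taylorSeries_neg_log hz)
  simpa [Finset.sum_range_succ, log_re] using (Complex.hasSum_re h)

lemma neg_log_norm_one_sub_le {z : ℂ} {r : ℝ} (hzr : ‖z‖ ≤ r) (hr : r < 1) :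
    -Real.log ‖1 - z‖ ≤ z.re + (-Real.log (1 - r) - r) := by
  have hr0 : 0 ≤ r := (norm_nonneg z).trans hzr
  have hr' : ‖(r : ℂ)‖ < 1 := by rwa [norm_real, Real.norm_of_nonneg hr0]
  have hcomp := hasSum_re_pow_div_add_two hr'
  have h1r : ‖1 - (r : ℂ)‖ = 1 - r := by
    rw [← ofReal_one, ← ofReal_sub, norm_real, Real.norm_of_nonneg (by linarith)]
  rw [h1r, ofReal_re] at hcomp
  have hle : ∀ n : ℕ, (z ^ (n + 2) / (n + 2 : ℕ)).re ≤ ((r : ℂ) ^ (n + 2) / (n + 2 : ℕ)).re := by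
    intro n
    calc (z ^ (n + 2) / (n + 2 : ℕ)).re ≤ ‖z‖ ^ (n + 2) / (n + 2 : ℕ) := by
          simpa only [norm_div, norm_pow, norm_natCast] using
            re_le_norm (z ^ (n + 2) / (n + 2 : ℕ))
      _ ≤ r ^ (n + 2) / (n + 2 : ℕ) := by gcongr
      _ = ((r : ℂ) ^ (n + 2) / (n + 2 : ℕ)).re := by norm_cast
  linarith [hasSum_le hle (hasSum_re_pow_div_add_two (hzr.trans_lt hr)) hcomp]

lemma summable_neg_log_one_sub_sub {ι : Type*} {x : ι → ℝ} (hx : ∀ i, |x i| ≤ 1 / 2)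
    (hsq : Summable fun i ↦ x i ^ 2) : Summable fun i ↦ -Real.log (1 - x i) - x i := by
  refine .of_norm_bounded (hsq.mul_left 2) fun i ↦ ?_
  have h := Real.abs_log_sub_add_sum_range_le ((hx i).trans_lt (by norm_num)) 1
  simp only [Finset.range_one, Finset.sum_singleton, zero_add, pow_one, Nat.cast_zero, div_one,
    one_add_one_eq_two] at h
  rw [Real.norm_eq_abs, ← neg_add', abs_neg, add_comm]
  refine h.trans ?_
  rw [div_le_iff₀ (by linarith [hx i]), ← sq_abs (x i)]
  nlinarith [hx i, abs_nonneg (x i)]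

lemma re_tsum_neg_log_one_sub_le {ι : Type*} {f : ι → ℂ} {r : ι → ℝ} {C : ℝ}
    (hf : Summable f) (hfr : ∀ i, ‖f i‖ ≤ r i) (hr : ∀ i, r i < 1)
    (hC : HasSum (fun i ↦ -Real.log (1 - r i) - r i) C) :
    (∑' i, -log (1 - f i)).re ≤ (∑' i, f i).re + C := by
  have hlog : HasSum (fun i ↦ -Real.log ‖1 - f i‖) (∑' i, -log (1 - f i)).re := by
    simpa only [neg_re, log_re] using hasSum_re hf.clog_one_sub.neg.hasSum
  exact hasSum_le (fun i ↦ neg_log_norm_one_sub_le (hfr i) (hr i)) hlog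
    ((hasSum_re hf.hasSum).add hC)

noncomputable def divCpowHom (g : ℕ → ℝ) (hg1 : g 1 = 1)
    (hgmul : ∀ m n : ℕ, g (m * n) = g m * g n) {s : ℂ} (hs : s ≠ 0) : ℕ →*₀ ℂ where
  toFun n := g n / (n : ℂ) ^ s
  map_zero' := by simp [zero_cpow hs]
  map_one' := by simp [hg1]
  map_mul' m n := by
    simp only [hgmul, Nat.cast_mul, natCast_mul_natCast_cpow, ofReal_mul, div_mul_div_comm]

lemma norm_ofReal_div_natCast_cpow_le {a : ℝ} (ha : |a| ≤ 1) {n : ℕ} (hn : 0 < n) {s : ℂ}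
    (hs : 1 ≤ s.re) : ‖(a : ℂ) / (n : ℂ) ^ s‖ ≤ 1 / n := by
  rw [norm_div, norm_real, Real.norm_eq_abs, norm_natCast_cpow_of_pos hn]
  have hn1 : (1 : ℝ) ≤ n := by exact_mod_cast hn
  gcongr
  simpa using Real.rpow_le_rpow_of_exponent_le hn1 hs

/-- For a real completely multiplicative `g` with `|g| ≤ 1` and
`F(s) = ∑_{n ≥ 1} g(n) n^{−s}`, for `Re(s) > 1`:
`|F(s)| ≤ exp(γ − M) · exp(Re ∑_p g(p)/p^s)`, where `γ` is the Euler–Mascheroni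
constant and `M` the Meissel–Mertens constant. -/
theorem F_bound (M : ℝ)
    (hM : M = Real.eulerMascheroniConstant +
      ∑' p : {p : ℕ // p.Prime}, (Real.log (1 - 1 / (p : ℝ)) + 1 / (p : ℝ)))
    (g : ℕ → ℝ) (hg1 : g 1 = 1) (hgmul : ∀ m n : ℕ, g (m * n) = g m * g n)
    (hgle : ∀ n : ℕ, |g n| ≤ 1)
    (s : ℂ) (hs : 1 < s.re) :
    ‖∑' n : ℕ, (g n : ℂ) / (n : ℂ) ^ s‖ ≤
      Real.exp (Real.eulerMascheroniConstant - M) *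
        Real.exp ((∑' p : {p : ℕ // p.Prime}, (g p : ℂ) / (p : ℂ) ^ s).re) := by
  have hs0 : s ≠ 0 := ne_zero_of_one_lt_re hs
  set f := divCpowHom g hg1 hgmul hs0
  have hsum : Summable (‖f ·‖) := by
    have hL := LSeriesSummable_of_bounded_of_one_lt_re (f := fun n ↦ (g n : ℂ)) (m := 1)
      (fun n _ ↦ by simpa using hgle n) hs
    exact hL.norm.congr fun n ↦ by rw [LSeries.term_of_ne_zero' hs0]; rfl
  have hfp (p : Nat.Primes) : ‖f p‖ ≤ 1 / p :=
    norm_ofReal_div_natCast_cpow_le (hgle p) p.prop.pos hs.le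
  have hp (p : Nat.Primes) : |1 / (p : ℝ)| ≤ 1 / 2 := by
    have : (2 : ℝ) ≤ p := by exact_mod_cast p.prop.two_le
    rw [abs_of_pos (by positivity)]
    gcongr
  have hsq : Summable fun p : Nat.Primes ↦ (1 / (p : ℝ)) ^ 2 := by
    simp only [div_pow, one_pow]
    exact (Real.summable_one_div_nat_pow.mpr one_lt_two).comp_injective
      Nat.Primes.coe_nat_injective
  have hC : HasSum (fun p : Nat.Primes ↦ -Real.log (1 - 1 / p) - 1 / p)
      (Real.eulerMascheroniConstant - M) := by
    rw [hM, sub_add_cancel_left, ← tsum_neg]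
    simp only [neg_add']
    exact (summable_neg_log_one_sub_sub hp hsq).hasSum
  change ‖∑' n, f n‖ ≤ _ * Real.exp (∑' p : Nat.Primes, f p).re
  rw [← EulerProduct.exp_tsum_primes_log_eq_tsum hsum, norm_exp, ← Real.exp_add]
  refine Real.exp_le_exp.mpr ?_
  have hprimes := re_tsum_neg_log_one_sub_le (f := fun p : Nat.Primes ↦ f p)
    (hsum.of_norm.comp_injective Nat.Primes.coe_nat_injective) hfp
    (fun p ↦ (le_abs_self _).trans_lt ((hp p).trans_lt one_half_lt_one)) hC
  exact hprimes.trans_eq (add_comm _ _)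
end
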